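/- arXiv:2310.00419 — 4 statements merged into one kernel-verified Lean document; each statement's English description precedes it below -/
import Mathlib

section
/- (Theorem 1, continuous-time PI consensus.) There exist ᾱ > 0 and 0 < β₁ < β₂ < ∞ such that for every α ∈ (0, ᾱ) and every β ∈ (β₁, β₂), the following holds: for every pair of differentiable trajectories x, v : [0,∞) → (ℝ^d)^m satisfying, for all t ≥ 0, ẋ(t) = −K( L̃ x(t) − β L̃ v(t) + α ∇F(x(t)) ) and v̇(t) = −β K L̃ x(t), with arbitrary initial condition (x(0), v(0)), there exist constants C, c > 0 such that ‖x_i(t) − x*‖ ≤ C e^{−c t} for every agent i ∈ {1,…,m} and all t ≥ 0; i.e., each local estimate x_i(t) converges exponentially to the same minimizer x*. -/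
open scoped RealInnerProductSpace

/-- The stacked state space `(ℝ^d)^m` with the Euclidean (ℓ²-product) structure. -/
abbrev Stack (d m : ℕ) : Type := PiLp 2 (fun _ : Fin m => EuclideanSpace ℝ (Fin d))

/-- Action of `L̃ = L ⊗ I_d` on stacked vectors: `(L̃ x)_i = ∑_j L_{ij} x_j`. -/
noncomputable def lapAct {d m : ℕ} (L : Matrix (Fin m) (Fin m) ℝ) (x : Stack d m) :
    Stack d m := WithLp.toLp 2 (fun i => ∑ j, L i j • x j)

/-- Action of the block-diagonal pre-conditioner `K = Diag(K_1,…,K_m)`: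
`(K x)_i = K_i x_i`. -/
noncomputable def preAct {d m : ℕ} (Ki : Fin m → Matrix (Fin d) (Fin d) ℝ)
    (x : Stack d m) : Stack d m := WithLp.toLp 2 (fun i => WithLp.toLp 2 ((Ki i).mulVec (x i)))

/-- Gradient of the cumulative cost `F(x) = ∑_i f_i(x_i)`: the stacked vector
`(∇f_1(x_1),…,∇f_m(x_m))`. -/
noncomputable def gradCumulative {d m : ℕ}
    (f : Fin m → EuclideanSpace ℝ (Fin d) → ℝ) (x : Stack d m) : Stack d m :=
  WithLp.toLp 2 (fun i => gradient (f i) (x i))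

/-!
In the error coordinates `a = x - X*` and `z = K⁻¹ (v - v̄)`, where `L̃ v̄ = (α / β) ∇F(X*)`
(solvable because `∑ᵢ ∇fᵢ(x*) = 0` puts `∇F(X*)` in `range L̃ = (ker L̃)ᗮ`) and `v̄` is shifted
along `ker L̃` so that `z(0) ⊥ ker L̃`, the flow becomes
`ȧ = -K (L̃ a - β L̃ K z + α h)`, `ż = -β L̃ a` with `h = ∇F(x) - ∇F(X*)`.
Hence `z` stays in `(ker L̃)ᗮ`, on which `L̃` is coercive. For small `ε > 0`,
`V = ⟪K⁻¹ a, a⟫ + ⟪K z, z⟫ - 2 ε ⟪a, z⟫` lies between `c ‖a‖²` and `A (‖a‖² + ‖z‖²)`;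
in `V̇` the cross terms `± 2 β ⟪L̃ a, K z⟫` cancel, and the restricted secant inequality and the
Lipschitz bound give `V̇ ≤ -γ V`. Grönwall's inequality then makes `‖a‖`, and with it every
`‖xᵢ - x*‖`, decay exponentially.
-/

theorem two_mul_mul_le_of_sq_le_mul {p q c s r : ℝ} (hp : 0 < p) (hc : c ^ 2 ≤ p * q) :
    2 * c * s * r ≤ p * s ^ 2 + q * r ^ 2 := by
  have h : 0 ≤ p * (p * s ^ 2 + q * r ^ 2 - 2 * c * s * r) := by
    nlinarith [sq_nonneg (p * s - c * r), mul_nonneg (sub_nonneg.mpr hc) (sq_nonneg r)]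
  nlinarith [(mul_nonneg_iff_of_pos_left hp).mp h]

theorem le_mul_exp_of_hasDerivAt_le_mul {W W' : ℝ → ℝ} {γ : ℝ}
    (hW : ∀ t ≥ 0, HasDerivAt W (W' t) t) (hle : ∀ t ≥ 0, W' t ≤ -γ * W t) :
    ∀ t ≥ 0, W t ≤ W 0 * Real.exp (-γ * t) := by
  intro t ht
  have h := le_gronwallBound_of_liminf_deriv_right_le (f := W) (f' := W') (δ := W 0) (K := -γ)
    (ε := 0) (a := 0) (b := t)
    (fun s hs => (hW s hs.1).continuousAt.continuousWithinAt)
    (fun s hs r hr => (hW s hs.1).hasDerivWithinAt.liminf_right_slope_le hr)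
    le_rfl (fun s hs => by simpa using hle s hs.1) t ⟨ht, le_rfl⟩
  rwa [gronwallBound_ε0, sub_zero] at h

theorem exists_le_mul_exp_of_sq_le_mul_exp {s : ℝ → ℝ} {B γ : ℝ} (hγ : 0 < γ)
    (hs : ∀ t ≥ 0, s t ^ 2 ≤ B * Real.exp (-γ * t)) :
    ∃ C > 0, ∃ c > 0, ∀ t ≥ 0, s t ≤ C * Real.exp (-c * t) := by
  refine ⟨√B + 1, by positivity, γ / 2, by positivity, fun t ht => ?_⟩
  have hexp : Real.exp (-γ * t) = Real.exp (-(γ / 2) * t) ^ 2 := by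
    rw [← Real.exp_nat_mul]; ring_nf
  calc s t ≤ √(s t ^ 2) := (le_abs_self _).trans_eq (Real.sqrt_sq_eq_abs _).symm
    _ ≤ √(B * Real.exp (-γ * t)) := Real.sqrt_le_sqrt (hs t ht)
    _ = √B * Real.exp (-(γ / 2) * t) := by
        rw [hexp, Real.sqrt_mul' _ (by positivity), Real.sqrt_sq (by positivity)]
    _ ≤ (√B + 1) * Real.exp (-(γ / 2) * t) := by gcongr; linarith

section InnerProductSpace

variable {E : Type*} [NormedAddCommGroup E] [InnerProductSpace ℝ E]

namespace ContinuousLinearMap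

theorem inner_map_self_le_opNorm_mul_sq (T : E →L[ℝ] E) (x : E) :
    ⟪T x, x⟫ ≤ ‖T‖ * ‖x‖ ^ 2 :=
  calc ⟪T x, x⟫ ≤ ‖T x‖ * ‖x‖ := real_inner_le_norm _ _
    _ ≤ ‖T‖ * ‖x‖ * ‖x‖ := by gcongr; exact T.le_opNorm x
    _ = ‖T‖ * ‖x‖ ^ 2 := by ring

theorem injective_of_inner_map_self_pos {K : E →L[ℝ] E} (hK : ∀ y ≠ 0, 0 < ⟪K y, y⟫) :
    Function.Injective K := by
  refine (injective_iff_map_eq_zero K).mpr fun y hy => ?_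
  by_contra hne
  simpa [hy] using hK y hne

theorem isSymmetric_of_rightInverse {K Q : E →L[ℝ] E} (hK : K.IsSymmetric)
    (hKQ : ∀ y, K (Q y) = y) : Q.IsSymmetric := fun x y => by
  conv_lhs => rw [← hKQ y]
  conv_rhs => rw [← hKQ x]
  exact (hK (Q x) (Q y)).symm

theorem inner_map_self_pos_of_rightInverse {K Q : E →L[ℝ] E}
    (hKpos : ∀ y ≠ 0, 0 < ⟪K y, y⟫) (hKQ : ∀ y, K (Q y) = y) : ∀ y ≠ 0, 0 < ⟪Q y, y⟫ := by
  intro y hy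
  have hQy : Q y ≠ 0 := fun h => hy (by rw [← hKQ y, h, map_zero])
  simpa [hKQ, real_inner_comm] using hKpos (Q y) hQy

theorem IsPositive.map_eq_zero_of_inner_map_self_eq_zero {T : E →L[ℝ] E} (hT : T.IsPositive)
    {y : E} (hy : ⟪T y, y⟫ = 0) : T y = 0 := by
  -- the quadratic form is nonnegative along the line `y - s • T y`
  set A := ‖T y‖ ^ 2
  set c := ⟪T (T y), T y⟫
  have hc : 0 ≤ c := hT.inner_nonneg_left _
  have hline : ∀ s : ℝ, 0 ≤ s ^ 2 * c - 2 * s * A := fun s => by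
    have h := hT.inner_nonneg_left (y - s • T y)
    simp only [map_sub, map_smul, inner_sub_left, inner_sub_right, real_inner_smul_left,
      real_inner_smul_right, hy, hT.inner_left_eq_inner_right (T y) y, real_inner_self_eq_norm_sq]
      at h
    linarith
  have hA : A = 0 := by
    have h := hline (A / (c + 1))
    have hA0 : 0 ≤ A := by positivity
    rw [div_pow, ← sub_nonneg] at h
    field_simp at h
    nlinarith
  simpa [A] using hA

end ContinuousLinearMap

variable [FiniteDimensional ℝ E]

theorem Submodule.exists_pos_mul_sq_le_inner_map_self (T : E →L[ℝ] E) (S : Submodule ℝ E)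
    (hT : ∀ y ∈ S, y ≠ 0 → 0 < ⟪T y, y⟫) : ∃ c > 0, ∀ y ∈ S, c * ‖y‖ ^ 2 ≤ ⟪T y, y⟫ := by
  set sph : Set E := (S : Set E) ∩ Metric.sphere 0 1
  -- a positive lower bound on the compact unit sphere of `S`, extended by homogeneity
  obtain ⟨c, hc, hsph⟩ : ∃ c > 0, ∀ u ∈ sph, c ≤ ⟪T u, u⟫ := by
    rcases sph.eq_empty_or_nonempty with hempty | hne
    · exact ⟨1, one_pos, by simp [hempty]⟩
    have hcomp : IsCompact sph := (isCompact_sphere 0 1).of_isClosed_subset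
      (S.closed_of_finiteDimensional.inter Metric.isClosed_sphere) Set.inter_subset_right
    obtain ⟨u₀, hu₀, hmin⟩ := hcomp.exists_isMinOn hne
      (T.continuous.inner (𝕜 := ℝ) continuous_id).continuousOn
    refine ⟨⟪T u₀, u₀⟫, hT u₀ hu₀.1 ?_, fun u hu => hmin hu⟩
    rintro rfl
    simpa using hu₀.2
  refine ⟨c, hc, fun y hy => ?_⟩
  rcases eq_or_ne y 0 with rfl | hy0
  · simp
  have hnorm : 0 < ‖y‖ := norm_pos_iff.mpr hy0
  have h := hsph (‖y‖⁻¹ • y) ⟨S.smul_mem _ hy, by simp [norm_smul, hnorm.ne']⟩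
  rw [map_smul, real_inner_smul_left, real_inner_smul_right, ← mul_assoc, ← mul_inv,
    le_inv_mul_iff₀ (by positivity)] at h
  linarith

theorem ContinuousLinearMap.IsPositive.exists_pos_mul_sq_le_inner_of_mem_orthogonal_ker
    {Λ : E →L[ℝ] E} (hΛ : Λ.IsPositive) :
    ∃ c > 0, ∀ y ∈ Λ.kerᗮ, c * ‖y‖ ^ 2 ≤ ⟪Λ y, y⟫ := by
  refine Λ.kerᗮ.exists_pos_mul_sq_le_inner_map_self Λ fun y hy hy0 =>
    (hΛ.inner_nonneg_left y).lt_of_ne fun h => hy0 ?_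
  have hker : y ∈ Λ.ker := hΛ.map_eq_zero_of_inner_map_self_eq_zero h.symm
  exact inner_self_eq_zero.mp (Submodule.inner_right_of_mem_orthogonal hker hy)

theorem LinearMap.IsSymmetric.range_eq_orthogonal_ker {T : E →ₗ[ℝ] E} (hT : T.IsSymmetric) :
    T.range = T.kerᗮ := by
  rw [← hT.orthogonal_range, Submodule.orthogonal_orthogonal]

theorem Submodule.sup_map_orthogonal_eq_top {K : E →L[ℝ] E} (hK : ∀ y ≠ 0, 0 < ⟪K y, y⟫)
    (U : Submodule ℝ E) : U ⊔ Uᗮ.map (K : E →ₗ[ℝ] E) = ⊤ := by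
  refine Submodule.eq_top_of_disjoint _ _ ?_ ?_
  · rw [← (Submodule.equivMapOfInjective _ (K.injective_of_inner_map_self_pos hK) Uᗮ).finrank_eq,
      U.finrank_add_finrank_orthogonal]
  · refine Submodule.disjoint_def.mpr fun y hyU ⟨s, hs, hKs⟩ => ?_
    have : ⟪K s, s⟫ = 0 := by
      rw [show K s = y from hKs]
      exact Submodule.inner_right_of_mem_orthogonal hyU hs
    rw [← hKs, show s = 0 by by_contra h; exact (hK s h).ne' this, map_zero]

theorem ContinuousLinearMap.exists_inverse_of_inner_map_self_pos {K : E →L[ℝ] E}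
    (hK : ∀ y ≠ 0, 0 < ⟪K y, y⟫) :
    ∃ Q : E →L[ℝ] E, (∀ y, Q (K y) = y) ∧ ∀ y, K (Q y) = y := by
  let e := (LinearEquiv.ofInjectiveEndo (K : E →ₗ[ℝ] E)
    (K.injective_of_inner_map_self_pos hK)).toContinuousLinearEquiv
  exact ⟨e.symm, e.symm_apply_apply, e.apply_symm_apply⟩

theorem exists_apply_eq_and_mem_orthogonal_ker {Λ K Q : E →L[ℝ] E} (hΛ : Λ.IsSymmetric)
    (hKpos : ∀ y ≠ 0, 0 < ⟪K y, y⟫) (hQK : ∀ y, Q (K y) = y) {y : E} (hy : y ∈ Λ.kerᗮ)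
    (w : E) : ∃ u, Λ u = y ∧ Q (w - u) ∈ Λ.kerᗮ := by
  obtain ⟨u, hu⟩ : y ∈ Λ.range := LinearMap.IsSymmetric.range_eq_orthogonal_ker hΛ ▸ hy
  have hw : w - u ∈ Λ.ker ⊔ Λ.kerᗮ.map (K : E →ₗ[ℝ] E) := by
    rw [Λ.ker.sup_map_orthogonal_eq_top hKpos]; exact Submodule.mem_top
  obtain ⟨n, hn, _, ⟨s, hs, rfl⟩, hsum⟩ := Submodule.mem_sup.mp hw
  refine ⟨u + n, by rw [map_add, show Λ u = y from hu, show Λ n = 0 from hn, add_zero], ?_⟩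
  rwa [show w - (u + n) = K s by rw [← sub_sub, ← hsum]; simp, hQK]

theorem Submodule.mem_of_hasDerivAt_mem (S : Submodule ℝ E) {z z' : ℝ → E}
    (hz : ∀ t ≥ 0, HasDerivAt z (z' t) t) (hz' : ∀ t ≥ 0, z' t ∈ S) (hz₀ : z 0 ∈ S) :
    ∀ t ≥ 0, z t ∈ S := by
  intro t ht
  rw [← S.orthogonal_orthogonal]
  refine fun w hw => ?_
  have hderiv : ∀ s ≥ (0 : ℝ), HasDerivAt (fun s => ⟪w, z s⟫) 0 s := fun s hs => by
    simpa [Submodule.inner_left_of_mem_orthogonal (hz' s hs) hw] using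
      (hasDerivAt_const s w).inner ℝ (hz s hs)
  have h := constant_of_has_deriv_right_zero (f := fun s => ⟪w, z s⟫) (a := 0) (b := t)
    (fun s hs => (hderiv s hs.1).continuousAt.continuousWithinAt)
    (fun s hs => (hderiv s hs.1).hasDerivWithinAt) t ⟨ht, le_rfl⟩
  exact h.trans (Submodule.inner_left_of_mem_orthogonal hz₀ hw)

theorem ContinuousLinearMap.IsPositive.mul_sq_le_inner_map_comp {Λ K : E →L[ℝ] E}
    (hΛ : Λ.IsPositive) {l k : ℝ} (hl : 0 ≤ l) (hk : 0 ≤ k)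
    (hΛl : ∀ y ∈ Λ.kerᗮ, l * ‖y‖ ^ 2 ≤ ⟪Λ y, y⟫) (hKk : ∀ y, k * ‖y‖ ^ 2 ≤ ⟪K y, y⟫)
    {z : E} (hz : z ∈ Λ.kerᗮ) : l * k ^ 2 * ‖z‖ ^ 2 ≤ ⟪Λ (K z), K z⟫ := by
  obtain ⟨n, hn, p, hp, hKz⟩ := Λ.ker.exists_add_mem_mem_orthogonal (K z)
  have hΛn : Λ n = 0 := hn
  have hquad : ⟪Λ (K z), K z⟫ = ⟪Λ p, p⟫ := by
    rw [hKz, map_add, hΛn, zero_add, inner_add_right, hΛ.inner_left_eq_inner_right, hΛn,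
      inner_zero_right, zero_add]
  have hpz : k * ‖z‖ ^ 2 ≤ ‖p‖ * ‖z‖ :=
    calc k * ‖z‖ ^ 2 ≤ ⟪K z, z⟫ := hKk z
      _ = ⟪p, z⟫ := by
        rw [hKz, inner_add_left, Submodule.inner_right_of_mem_orthogonal hn hz, zero_add]
      _ ≤ ‖p‖ * ‖z‖ := real_inner_le_norm _ _
  have hkp : k * ‖z‖ ≤ ‖p‖ := by
    rcases (norm_nonneg z).eq_or_lt with h0 | hpos
    · rw [← h0, mul_zero]; exact norm_nonneg _
    · exact le_of_mul_le_mul_right (by nlinarith) hpos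
  calc l * k ^ 2 * ‖z‖ ^ 2 = l * (k * ‖z‖) ^ 2 := by ring
    _ ≤ l * ‖p‖ ^ 2 := by gcongr
    _ ≤ ⟪Λ (K z), K z⟫ := hquad ▸ hΛl p hp

end InnerProductSpace

section Lyapunov

variable {E : Type*} [NormedAddCommGroup E] [InnerProductSpace ℝ E]

/-- The Lyapunov function of the PI flow in error coordinates `(a, z)`; `Q` plays the role
of `K⁻¹`. -/
def piLyapunov (K Q : E →L[ℝ] E) (ε : ℝ) (a z : E) : ℝ :=
  ⟪Q a, a⟫ + ⟪K z, z⟫ - 2 * ε * ⟪a, z⟫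

/-- The derivative of `piLyapunov K Q ε` at `(a, z)` in the direction `(a', z')`. -/
def piLyapunovDeriv (K Q : E →L[ℝ] E) (ε : ℝ) (a z a' z' : E) : ℝ :=
  2 * ⟪Q a, a'⟫ + 2 * ⟪K z, z'⟫ - 2 * ε * (⟪a', z⟫ + ⟪a, z'⟫)

variable {Λ K Q : E →L[ℝ] E} {ε : ℝ}

theorem HasDerivAt.piLyapunov (hK : K.IsSymmetric) (hQ : Q.IsSymmetric) {a z : ℝ → E}
    {a' z' : E} {t : ℝ} (ha : HasDerivAt a a' t) (hz : HasDerivAt z z' t) :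
    HasDerivAt (fun t => piLyapunov K Q ε (a t) (z t))
      (piLyapunovDeriv K Q ε (a t) (z t) a' z') t := by
  have h := (((Q.hasFDerivAt.comp_hasDerivAt t ha).inner ℝ ha).add
    ((K.hasFDerivAt.comp_hasDerivAt t hz).inner ℝ hz)).sub
    ((ha.inner ℝ hz).const_mul (2 * ε))
  refine h.congr_deriv ?_
  have hQ' : ⟪Q a', a t⟫ = ⟪a', Q (a t)⟫ := hQ a' (a t)
  have hK' : ⟪K z', z t⟫ = ⟪z', K (z t)⟫ := hK z' (z t)
  simp only [piLyapunovDeriv, Function.comp_apply, hQ', hK', real_inner_comm (Q (a t)),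
    real_inner_comm (K (z t))]
  ring

theorem piLyapunovDeriv_eq (hΛ : Λ.IsSymmetric) (hK : K.IsSymmetric) (hKQ : ∀ y, K (Q y) = y)
    (α β : ℝ) (a z h : E) :
    piLyapunovDeriv K Q ε a z (-K (Λ a - β • Λ (K z) + α • h)) (-(β • Λ a)) =
      -2 * (1 - ε * β) * ⟪Λ a, a⟫ - 2 * α * ⟪h, a⟫ - 2 * ε * β * ⟪Λ (K z), K z⟫
        + 2 * ε * ⟪Λ a + α • h, K z⟫ := by
  set w := Λ a - β • Λ (K z) + α • h
  have hQK : ⟪Q a, K w⟫ = ⟪a, w⟫ := by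
    have h := hK (Q a) w
    rwa [ContinuousLinearMap.coe_coe, hKQ, eq_comm] at h
  have hKz : ⟪K w, z⟫ = ⟪w, K z⟫ := hK w z
  have hΛaKz : ⟪a, Λ (K z)⟫ = ⟪Λ a, K z⟫ := (hΛ a (K z)).symm
  simp only [piLyapunovDeriv, inner_neg_right, inner_neg_left, hQK, hKz, w, inner_add_left,
    inner_add_right, inner_sub_left, inner_sub_right, real_inner_smul_left,
    real_inner_smul_right, hΛaKz]
  rw [real_inner_comm a (Λ a), real_inner_comm a h, real_inner_comm (K z) (Λ a)]
  ring

theorem piLyapunov_le (hε : 0 ≤ ε) (a z : E) :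
    piLyapunov K Q ε a z ≤ (‖Q‖ + ‖K‖ + ε) * (‖a‖ ^ 2 + ‖z‖ ^ 2) := by
  have hQa := Q.inner_map_self_le_opNorm_mul_sq a
  have hKz := K.inner_map_self_le_opNorm_mul_sq z
  have haz : -⟪a, z⟫ ≤ ‖a‖ * ‖z‖ := (neg_le_abs _).trans (abs_real_inner_le_norm a z)
  have hQ0 := norm_nonneg Q
  have hK0 := norm_nonneg K
  unfold piLyapunov
  nlinarith [sq_nonneg (‖a‖ - ‖z‖), mul_nonneg hQ0 (sq_nonneg ‖z‖),
    mul_nonneg hK0 (sq_nonneg ‖a‖)]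

theorem mul_sq_le_piLyapunov {q k : ℝ} (hε : 0 ≤ ε) (hεq : ε ≤ q / 2) (hεk : ε ≤ k) {a z : E}
    (hQq : q * ‖a‖ ^ 2 ≤ ⟪Q a, a⟫) (hKk : k * ‖z‖ ^ 2 ≤ ⟪K z, z⟫) :
    q / 2 * ‖a‖ ^ 2 ≤ piLyapunov K Q ε a z := by
  have haz : ⟪a, z⟫ ≤ ‖a‖ * ‖z‖ := real_inner_le_norm a z
  unfold piLyapunov
  nlinarith [sq_nonneg (‖a‖ - ‖z‖), mul_nonneg hε (sq_nonneg (‖a‖ - ‖z‖)),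
    mul_le_mul_of_nonneg_left haz hε, mul_le_mul_of_nonneg_right hεk (sq_nonneg ‖z‖),
    mul_le_mul_of_nonneg_right hεq (sq_nonneg ‖a‖)]

theorem piLyapunovDeriv_le (hΛ : Λ.IsPositive) (hK : K.IsSymmetric) (hKQ : ∀ y, K (Q y) = y)
    {α β μ Lg ρ : ℝ} (hα : 0 ≤ α) (hε : 0 ≤ ε) (hβ : 0 ≤ β) (hεβ : ε * β ≤ 1) {a z h : E}
    (hah : μ * ‖a‖ ^ 2 ≤ ⟪h, a⟫) (hh : ‖h‖ ≤ Lg * ‖a‖) (hz : ρ * ‖z‖ ^ 2 ≤ ⟪Λ (K z), K z⟫) :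
    piLyapunovDeriv K Q ε a z (-K (Λ a - β • Λ (K z) + α • h)) (-(β • Λ a)) ≤
      -2 * α * μ * ‖a‖ ^ 2 - 2 * ε * β * ρ * ‖z‖ ^ 2
        + 2 * ε * (‖K‖ * (‖Λ‖ + α * Lg)) * (‖a‖ * ‖z‖) := by
  rw [piLyapunovDeriv_eq hΛ.isSymmetric hK hKQ]
  have hΛa : 0 ≤ (1 - ε * β) * ⟪Λ a, a⟫ :=
    mul_nonneg (sub_nonneg.mpr hεβ) (hΛ.inner_nonneg_left a)
  have hsum : ‖Λ a + α • h‖ ≤ ‖Λ‖ * ‖a‖ + α * (Lg * ‖a‖) :=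
    (norm_add_le _ _).trans (add_le_add (Λ.le_opNorm a)
      (by rw [norm_smul, Real.norm_of_nonneg hα]; exact mul_le_mul_of_nonneg_left hh hα))
  have hcross : ⟪Λ a + α • h, K z⟫ ≤ ‖K‖ * (‖Λ‖ + α * Lg) * (‖a‖ * ‖z‖) :=
    calc ⟪Λ a + α • h, K z⟫ ≤ ‖Λ a + α • h‖ * ‖K z‖ := real_inner_le_norm _ _
      _ ≤ (‖Λ‖ * ‖a‖ + α * (Lg * ‖a‖)) * (‖K‖ * ‖z‖) :=
        mul_le_mul hsum (K.le_opNorm z) (norm_nonneg _) ((norm_nonneg _).trans hsum)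
      _ = ‖K‖ * (‖Λ‖ + α * Lg) * (‖a‖ * ‖z‖) := by ring
  nlinarith [mul_le_mul_of_nonneg_left hah hα, mul_le_mul_of_nonneg_left hz (mul_nonneg hε hβ),
    mul_le_mul_of_nonneg_left hcross hε]

theorem piLyapunovDeriv_le_neg_mul (hΛ : Λ.IsPositive) (hK : K.IsSymmetric)
    (hKQ : ∀ y, K (Q y) = y) {α β μ Lg ρ : ℝ} (hα : 0 < α) (hβ : 0 ≤ β) (hμ : 0 < μ)
    (hε : 0 < ε) (hρ : 0 ≤ ρ) (hεβ : ε * β ≤ 1)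
    (hεM : ε * (‖K‖ * (‖Λ‖ + α * Lg)) ^ 2 ≤ α * μ * (β * ρ)) {a z h : E}
    (hah : μ * ‖a‖ ^ 2 ≤ ⟪h, a⟫) (hh : ‖h‖ ≤ Lg * ‖a‖) (hz : ρ * ‖z‖ ^ 2 ≤ ⟪Λ (K z), K z⟫) :
    piLyapunovDeriv K Q ε a z (-K (Λ a - β • Λ (K z) + α • h)) (-(β • Λ a)) ≤
      -(min (α * μ) (ε * β * ρ) / (‖Q‖ + ‖K‖ + ε)) * piLyapunov K Q ε a z := by
  set M := ‖K‖ * (‖Λ‖ + α * Lg)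
  set η := min (α * μ) (ε * β * ρ)
  set A := ‖Q‖ + ‖K‖ + ε
  have hA : 0 < A := by positivity
  have hD := piLyapunovDeriv_le hΛ hK hKQ hα.le hε.le hβ hεβ hah hh hz
  have hcross : 2 * (ε * M) * ‖a‖ * ‖z‖ ≤ α * μ * ‖a‖ ^ 2 + ε * β * ρ * ‖z‖ ^ 2 :=
    two_mul_mul_le_of_sq_le_mul (by positivity) (by nlinarith [mul_le_mul_of_nonneg_left hεM hε.le])
  have hV : η / A * piLyapunov K Q ε a z ≤ η * (‖a‖ ^ 2 + ‖z‖ ^ 2) :=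
    calc η / A * piLyapunov K Q ε a z ≤ η / A * (A * (‖a‖ ^ 2 + ‖z‖ ^ 2)) := by
          gcongr; exact piLyapunov_le hε.le a z
      _ = η * (‖a‖ ^ 2 + ‖z‖ ^ 2) := by field_simp
  nlinarith [mul_le_mul_of_nonneg_right (min_le_left (α * μ) (ε * β * ρ)) (sq_nonneg ‖a‖),
    mul_le_mul_of_nonneg_right (min_le_right (α * μ) (ε * β * ρ)) (sq_nonneg ‖z‖)]

variable [FiniteDimensional ℝ E]

theorem exists_piLyapunov_decay (hΛ : Λ.IsPositive) (hK : K.IsSymmetric)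
    (hKpos : ∀ y ≠ 0, 0 < ⟪K y, y⟫) (hKQ : ∀ y, K (Q y) = y) {α β μ : ℝ} (hα : 0 < α)
    (hβ : 0 < β) (hμ : 0 < μ) (Lg : ℝ) :
    ∃ ε c γ : ℝ, 0 < c ∧ 0 < γ ∧ (∀ a z, c * ‖a‖ ^ 2 ≤ piLyapunov K Q ε a z) ∧
      ∀ a z h : E, z ∈ Λ.kerᗮ → μ * ‖a‖ ^ 2 ≤ ⟪h, a⟫ → ‖h‖ ≤ Lg * ‖a‖ →
        piLyapunovDeriv K Q ε a z (-K (Λ a - β • Λ (K z) + α • h)) (-(β • Λ a)) ≤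
          -γ * piLyapunov K Q ε a z := by
  obtain ⟨k, hk, hKk⟩ := (⊤ : Submodule ℝ E).exists_pos_mul_sq_le_inner_map_self K
    fun y _ => hKpos y
  obtain ⟨q, hq, hQq⟩ := (⊤ : Submodule ℝ E).exists_pos_mul_sq_le_inner_map_self Q
    fun y _ => K.inner_map_self_pos_of_rightInverse hKpos hKQ y
  obtain ⟨l, hl, hΛl⟩ := hΛ.exists_pos_mul_sq_le_inner_of_mem_orthogonal_ker
  set M := ‖K‖ * (‖Λ‖ + α * Lg)
  set ρ := l * k ^ 2
  have hρ : 0 < ρ := by positivity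
  -- `ε` small enough for `piLyapunov` to be coercive and for its derivative to be negative
  obtain ⟨ε, hε, hεq, hεk, hεβ, hεM⟩ : ∃ ε > 0, ε ≤ q / 2 ∧ ε ≤ k ∧ ε * β ≤ 1 ∧
      ε * M ^ 2 ≤ α * μ * (β * ρ) := by
    set C := α * μ * (β * ρ) / (M ^ 2 + 1)
    refine ⟨min (min (q / 2) k) (min β⁻¹ C), by positivity, by simp, by simp, ?_, ?_⟩
    · calc min (min (q / 2) k) (min β⁻¹ C) * β ≤ β⁻¹ * β := by gcongr; simp
        _ = 1 := inv_mul_cancel₀ hβ.ne'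
    · calc min (min (q / 2) k) (min β⁻¹ C) * M ^ 2 ≤ C * (M ^ 2 + 1) := by
            gcongr
            · simp
            · linarith
        _ = α * μ * (β * ρ) := div_mul_cancel₀ _ (by positivity)
  refine ⟨ε, q / 2, min (α * μ) (ε * β * ρ) / (‖Q‖ + ‖K‖ + ε), by positivity, by positivity,
    fun a z => ?_, fun a z h hz hah hh => ?_⟩
  · exact mul_sq_le_piLyapunov hε.le hεq hεk (hQq a trivial) (hKk z trivial)
  · exact piLyapunovDeriv_le_neg_mul hΛ hK hKQ hα hβ.le hμ hε hρ.le hεβ hεM hah hh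
      (hΛ.mul_sq_le_inner_map_comp hl.le hk.le hΛl (fun y => hKk y trivial) hz)

theorem exists_exp_decay_of_piError (hΛ : Λ.IsPositive) (hK : K.IsSymmetric)
    (hKpos : ∀ y ≠ 0, 0 < ⟪K y, y⟫) (hKQ : ∀ y, K (Q y) = y) {α β μ Lg : ℝ} (hα : 0 < α)
    (hβ : 0 < β) (hμ : 0 < μ) {a z h : ℝ → E}
    (ha : ∀ t ≥ 0, HasDerivAt a (-K (Λ (a t) - β • Λ (K (z t)) + α • h t)) t)
    (hz : ∀ t ≥ 0, HasDerivAt z (-(β • Λ (a t))) t) (hz₀ : z 0 ∈ Λ.kerᗮ)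
    (hRSI : ∀ t ≥ 0, μ * ‖a t‖ ^ 2 ≤ ⟪h t, a t⟫) (hLip : ∀ t ≥ 0, ‖h t‖ ≤ Lg * ‖a t‖) :
    ∃ C > 0, ∃ c > 0, ∀ t ≥ 0, ‖a t‖ ≤ C * Real.exp (-c * t) := by
  obtain ⟨ε, c, γ, hc, hγ, hlow, hderiv⟩ := exists_piLyapunov_decay hΛ hK hKpos hKQ hα hβ hμ Lg
  have hzS : ∀ t ≥ 0, z t ∈ Λ.kerᗮ := Λ.kerᗮ.mem_of_hasDerivAt_mem hz
    (fun t _ => by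
      rw [← LinearMap.IsSymmetric.range_eq_orthogonal_ker hΛ.isSymmetric]
      exact Λ.range.neg_mem (Λ.range.smul_mem β ⟨a t, rfl⟩))
    hz₀
  have hV := le_mul_exp_of_hasDerivAt_le_mul
    (fun t ht => (ha t ht).piLyapunov hK (K.isSymmetric_of_rightInverse hK hKQ) (hz t ht))
    (fun t ht => hderiv _ _ _ (hzS t ht) (hRSI t ht) (hLip t ht))
  refine exists_le_mul_exp_of_sq_le_mul_exp (B := piLyapunov K Q ε (a 0) (z 0) / c) hγ
    fun t ht => ?_
  rw [div_mul_eq_mul_div, le_div_iff₀ hc]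
  linarith [hlow (a t) (z t), hV t ht]

theorem exists_exp_decay_of_piFlow (hΛ : Λ.IsPositive) (hK : K.IsSymmetric)
    (hKpos : ∀ y ≠ 0, 0 < ⟪K y, y⟫) {g : E → E} {X : E} {μ Lg : ℝ} (hμ : 0 < μ)
    (hX : X ∈ Λ.ker) (hgX : g X ∈ Λ.kerᗮ)
    (hRSI : ∀ y, μ * ‖y - X‖ ^ 2 ≤ ⟪g y - g X, y - X⟫) (hLip : ∀ y, ‖g y - g X‖ ≤ Lg * ‖y - X‖)
    {α β : ℝ} (hα : 0 < α) (hβ : 0 < β) {x v : ℝ → E}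
    (hx : ∀ t ≥ 0, HasDerivAt x (-K (Λ (x t) - β • Λ (v t) + α • g (x t))) t)
    (hv : ∀ t ≥ 0, HasDerivAt v (-(β • K (Λ (x t)))) t) :
    ∃ C > 0, ∃ c > 0, ∀ t ≥ 0, ‖x t - X‖ ≤ C * Real.exp (-c * t) := by
  obtain ⟨Q, hQK, hKQ⟩ := K.exists_inverse_of_inner_map_self_pos hKpos
  -- `vbar` is an equilibrium of the integral state, chosen so that `z 0 = Q (v 0 - vbar) ⊥ ker Λ`
  obtain ⟨vbar, hvbar, hz₀⟩ := exists_apply_eq_and_mem_orthogonal_ker hΛ.isSymmetric hKpos hQK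
    (Λ.kerᗮ.smul_mem (α / β) hgX) (v 0)
  have hΛX : Λ X = 0 := hX
  refine exists_exp_decay_of_piError hΛ hK hKpos hKQ hα hβ hμ (z := fun t => Q (v t - vbar))
    (h := fun t => g (x t) - g X) (fun t ht => ((hx t ht).sub_const X).congr_deriv ?_)
    (fun t ht => ?_) hz₀ (fun t _ => hRSI (x t)) (fun t _ => hLip (x t))
  · simp only [hKQ, map_sub, hΛX, hvbar, smul_sub, smul_smul, mul_div_cancel₀ _ hβ.ne']
    abel_nf
  · exact (Q.hasFDerivAt.comp_hasDerivAt t ((hv t ht).sub_const vbar)).congr_deriv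
      (by simp [hQK, hΛX])

end Lyapunov

section Stack

open Matrix

variable {d m : ℕ}

theorem Stack.inner_eq_sum_dotProduct (x y : Stack d m) :
    ⟪x, y⟫ = ∑ k, (fun i => x i k) ⬝ᵥ fun i => y i k := by
  simp only [PiLp.inner_apply, RCLike.inner_apply, conj_trivial, dotProduct]
  rw [Finset.sum_comm]
  simp only [mul_comm]

theorem lapAct_apply_apply (L : Matrix (Fin m) (Fin m) ℝ) (x : Stack d m) (i : Fin m)
    (k : Fin d) : lapAct L x i k = (L *ᵥ fun j => x j k) i := by
  simp [lapAct, mulVec, dotProduct]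

theorem inner_lapAct (L : Matrix (Fin m) (Fin m) ℝ) (x y : Stack d m) :
    ⟪lapAct L x, y⟫ = ∑ k, (L *ᵥ fun i => x i k) ⬝ᵥ fun i => y i k := by
  simp only [Stack.inner_eq_sum_dotProduct, lapAct_apply_apply]

variable (d) in
noncomputable def lapActCLM (L : Matrix (Fin m) (Fin m) ℝ) : Stack d m →L[ℝ] Stack d m where
  toFun := lapAct L
  map_add' x y := by
    ext i k
    simp only [lapAct, PiLp.add_apply, smul_add, Finset.sum_add_distrib]
  map_smul' c x := by
    ext i k
    simp only [lapAct, PiLp.smul_apply, smul_comm _ c, Finset.smul_sum, RingHom.id_apply]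
  cont := by unfold lapAct; fun_prop

theorem lapActCLM_apply (L : Matrix (Fin m) (Fin m) ℝ) (x : Stack d m) :
    lapActCLM d L x = lapAct L x := rfl

theorem isPositive_lapActCLM {L : Matrix (Fin m) (Fin m) ℝ} (hL : L.PosSemidef) :
    (lapActCLM d L).IsPositive := by
  rw [ContinuousLinearMap.isPositive_iff]
  refine ⟨fun x y => ?_, fun x => ?_⟩
  · simp only [ContinuousLinearMap.coe_coe, lapActCLM_apply]
    rw [real_inner_comm (lapAct L y), inner_lapAct, inner_lapAct]
    refine Finset.sum_congr rfl fun k _ => ?_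
    rw [dotProduct_comm, dotProduct_mulVec, ← mulVec_transpose,
      ← conjTranspose_eq_transpose_of_trivial, hL.isHermitian.eq]
  · rw [lapActCLM_apply, inner_lapAct]
    refine Finset.sum_nonneg fun k _ => ?_
    simpa [dotProduct_comm] using hL.dotProduct_mulVec_nonneg fun i => x i k

variable (G : SimpleGraph (Fin m)) [DecidableRel G.Adj]

theorem lapAct_lapMatrix_eq_zero_iff (hG : G.Connected) {x : Stack d m} :
    lapAct (G.lapMatrix ℝ) x = 0 ↔ ∀ i j, x i = x j := by
  have hcol (k : Fin d) : (G.lapMatrix ℝ *ᵥ fun j => x j k) = 0 ↔ ∀ i j, x i k = x j k := by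
    rw [G.lapMatrix_mulVec_eq_zero_iff_forall_reachable]
    exact forall₂_congr fun i j => ⟨fun h => h (hG.preconnected i j), fun h _ => h⟩
  constructor
  · intro h i j
    ext k
    refine (hcol k).mp (funext fun i' => ?_) i j
    simpa [lapAct_apply_apply] using congr($h i' k)
  · intro h
    ext i k
    rw [lapAct_apply_apply, (hcol k).mpr fun i j => congr($(h i j) k)]
    rfl

theorem mem_orthogonal_ker_lapActCLM (hG : G.Connected) {y : Stack d m} (hy : ∑ i, y i = 0) :
    y ∈ (lapActCLM d (G.lapMatrix ℝ)).kerᗮ := by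
  intro u hu
  obtain ⟨i₀⟩ := hG.nonempty
  have hconst := (lapAct_lapMatrix_eq_zero_iff G hG).mp hu
  rw [PiLp.inner_apply]
  simp only [fun i => hconst i i₀, ← inner_sum, hy, inner_zero_right]

variable (Ki : Fin m → Matrix (Fin d) (Fin d) ℝ)

theorem inner_preAct (x y : Stack d m) :
    ⟪preAct Ki x, y⟫ = ∑ i, (Ki i *ᵥ x i) ⬝ᵥ y i := by
  simp only [PiLp.inner_apply, RCLike.inner_apply, conj_trivial, preAct, dotProduct, mul_comm]

noncomputable def preActCLM : Stack d m →L[ℝ] Stack d m where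
  toFun := preAct Ki
  map_add' x y := by
    ext i k
    simp only [preAct, PiLp.add_apply, WithLp.ofLp_add, mulVec_add, Pi.add_apply]
  map_smul' c x := by
    ext i k
    simp only [preAct, PiLp.smul_apply, WithLp.ofLp_smul, mulVec_smul, Pi.smul_apply,
      RingHom.id_apply]
  cont := by unfold preAct; fun_prop

theorem preActCLM_apply (x : Stack d m) : preActCLM Ki x = preAct Ki x := rfl

variable {Ki}

theorem isSymmetric_preActCLM (hKi : ∀ i, (Ki i).IsHermitian) : (preActCLM Ki).IsSymmetric := by
  intro x y
  simp only [ContinuousLinearMap.coe_coe, preActCLM_apply]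
  rw [real_inner_comm (preAct Ki y), inner_preAct, inner_preAct]
  refine Finset.sum_congr rfl fun i _ => ?_
  rw [dotProduct_comm, dotProduct_mulVec, ← mulVec_transpose,
    ← conjTranspose_eq_transpose_of_trivial, (hKi i).eq]

theorem inner_preActCLM_self_pos (hKi : ∀ i, (Ki i).PosDef) {x : Stack d m} (hx : x ≠ 0) :
    0 < ⟪preActCLM Ki x, x⟫ := by
  obtain ⟨i₀, hi₀⟩ : ∃ i, x i ≠ 0 := by
    by_contra! h
    exact hx (PiLp.ext h)
  rw [preActCLM_apply, inner_preAct]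
  refine Finset.sum_pos' (fun i _ => ?_) ⟨i₀, Finset.mem_univ _, ?_⟩
  · simpa [dotProduct_comm] using (hKi i).posSemidef.dotProduct_mulVec_nonneg (x i).ofLp
  · simpa [dotProduct_comm] using (hKi i₀).dotProduct_mulVec_pos
      (fun h => hi₀ (WithLp.ofLp_injective 2 h))

end Stack

set_option maxHeartbeats 4000000 in
set_option synthInstance.maxHeartbeats 2000000 in
theorem pi_consensus_continuous_exponential_convergence_general
    (d m : ℕ)
    (G : SimpleGraph (Fin m)) [DecidableRel G.Adj] (hG : G.Connected)
    (f : Fin m → EuclideanSpace ℝ (Fin d) → ℝ)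
    (Ki : Fin m → Matrix (Fin d) (Fin d) ℝ)
    (hKi : ∀ i, (Ki i).PosDef)
    (xstar : EuclideanSpace ℝ (Fin d))
    (hstar : ∑ i, gradient (f i) xstar = 0)
    (Xstar : Stack d m) (hXstar : ∀ i, Xstar i = xstar)
    (μ Lf : ℝ) (hμ : 0 < μ)
    (hRSI : ∀ x : Stack d m,
      μ * ‖x - Xstar‖ ^ 2 ≤ ⟪gradCumulative f x - gradCumulative f Xstar, x - Xstar⟫)
    (hLip : ∀ x y : Stack d m,
      ‖gradCumulative f x - gradCumulative f y‖ ≤ Lf * ‖x - y‖) :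
    ∃ αbar > (0 : ℝ), ∃ β₁ β₂ : ℝ, 0 < β₁ ∧ β₁ < β₂ ∧
      ∀ α β : ℝ, 0 < α → α < αbar → β₁ < β → β < β₂ →
        ∀ x v : ℝ → Stack d m,
          (∀ t ≥ (0 : ℝ), HasDerivAt x
            (-(preAct Ki (lapAct (G.lapMatrix ℝ) (x t) - β • lapAct (G.lapMatrix ℝ) (v t)
              + α • gradCumulative f (x t)))) t) →
          (∀ t ≥ (0 : ℝ), HasDerivAt v
            (-(β • preAct Ki (lapAct (G.lapMatrix ℝ) (x t)))) t) →
          ∃ C > (0 : ℝ), ∃ c > (0 : ℝ), ∀ i : Fin m, ∀ t ≥ (0 : ℝ),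
            ‖x t i - xstar‖ ≤ C * Real.exp (-c * t) := by
  have hXker : Xstar ∈ (lapActCLM d (G.lapMatrix ℝ)).ker :=
    (lapAct_lapMatrix_eq_zero_iff G hG).mpr fun i j => by rw [hXstar, hXstar]
  have hgrad : gradCumulative f Xstar ∈ (lapActCLM d (G.lapMatrix ℝ)).kerᗮ :=
    mem_orthogonal_ker_lapActCLM G hG (by simpa [gradCumulative, hXstar] using hstar)
  refine ⟨1, one_pos, 1, 2, one_pos, one_lt_two, fun α β hα _ hβ _ x v hx hv => ?_⟩
  obtain ⟨C, hC, c, hc, hdecay⟩ := exists_exp_decay_of_piFlow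
    (isPositive_lapActCLM (G.posSemidef_lapMatrix ℝ))
    (isSymmetric_preActCLM fun i => (hKi i).isHermitian)
    (fun y hy => inner_preActCLM_self_pos hKi hy) hμ hXker hgrad hRSI (fun y => hLip y Xstar)
    hα (by linarith) hx hv
  refine ⟨C, hC, c, hc, fun i t ht => le_trans ?_ (hdecay t ht)⟩
  rw [← hXstar i]
  exact PiLp.norm_apply_le (x t - Xstar) i

set_option maxHeartbeats 4000000 in
set_option synthInstance.maxHeartbeats 2000000 in
/-- Theorem 1 (continuous-time pre-conditioned PI consensus): under connectivity of the
graph, SPD pre-conditioners, the restricted secant inequality for the cumulative cost `F`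
w.r.t. `X* = (x*,…,x*)` and `L_f`-Lipschitz continuity of `∇F`, there exist `ᾱ > 0` and
`0 < β₁ < β₂` such that for all `α ∈ (0, ᾱ)`, `β ∈ (β₁, β₂)`, every trajectory of
`ẋ = −K(L̃x − βL̃v + α∇F(x))`, `v̇ = −βKL̃x` (arbitrary initialization) has each local
estimate `x_i(t)` converging exponentially to the same minimizer `x*`. -/
theorem pi_consensus_continuous_exponential_convergence
    (d m : ℕ)
    (G : SimpleGraph (Fin m)) [DecidableRel G.Adj] (hG : G.Connected)
    (f : Fin m → EuclideanSpace ℝ (Fin d) → ℝ)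
    (hf : ∀ i, ContDiff ℝ 1 (f i))
    (Ki : Fin m → Matrix (Fin d) (Fin d) ℝ)
    (hKi : ∀ i, (Ki i).PosDef)
    (xstar : EuclideanSpace ℝ (Fin d))
    (hstar : ∑ i, gradient (f i) xstar = 0)
    (Xstar : Stack d m) (hXstar : ∀ i, Xstar i = xstar)
    (μ Lf : ℝ) (hμ : 0 < μ) (hLf : 0 < Lf)
    (hRSI : ∀ x : Stack d m,
      μ * ‖x - Xstar‖ ^ 2 ≤ ⟪gradCumulative f x - gradCumulative f Xstar, x - Xstar⟫)
    (hLip : ∀ x y : Stack d m,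
      ‖gradCumulative f x - gradCumulative f y‖ ≤ Lf * ‖x - y‖) :
    ∃ αbar > (0 : ℝ), ∃ β₁ β₂ : ℝ, 0 < β₁ ∧ β₁ < β₂ ∧
      ∀ α β : ℝ, 0 < α → α < αbar → β₁ < β → β < β₂ →
        ∀ x v : ℝ → Stack d m,
          (∀ t ≥ (0 : ℝ), HasDerivAt x
            (-(preAct Ki (lapAct (G.lapMatrix ℝ) (x t) - β • lapAct (G.lapMatrix ℝ) (v t)
              + α • gradCumulative f (x t)))) t) →
          (∀ t ≥ (0 : ℝ), HasDerivAt v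
            (-(β • preAct Ki (lapAct (G.lapMatrix ℝ) (x t)))) t) →
          ∃ C > (0 : ℝ), ∃ c > (0 : ℝ), ∀ i : Fin m, ∀ t ≥ (0 : ℝ),
            ‖x t i - xstar‖ ≤ C * Real.exp (-c * t) :=
  pi_consensus_continuous_exponential_convergence_general d m G hG f Ki hKi xstar hstar Xstar hXstar
    μ Lf hμ hRSI hLip
end

section
/- Let α, β > 0 and let (X̂, v̂) ∈ (ℝ^d)^m × (ℝ^d)^m be an equilibrium point of the pre-conditioned PI consensus dynamics, i.e., K( L̃ X̂ − β L̃ v̂ + α ∇F(X̂) ) = 0 and β K L̃ X̂ = 0. Then there exists x̂ ∈ ℝ^d such that X̂ = (x̂,…,x̂) (all block components of X̂ are equal) and ∑_{i=1}^m ∇f_i(x̂) = 0; i.e., x̂ is a stationary point of the aggregate cost f = ∑_{i=1}^m f_i. -/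
/-!
Each `K_i` is invertible, so both equilibrium equations hold without `K`. The second then puts
`X̂` in the kernel of `L̃`, which for a connected graph consists of consensus vectors; summing
the first over the agents gives `α ∑ ∇f_i(x̂) = β ∑_i (L̃v̂)_i = 0`, because the columns of the
symmetric Laplacian sum to zero.
-/

open scoped RealInnerProductSpace

open Matrix

section Stack

variable {d m : ℕ}

theorem preAct_eq_zero_iff {Ki : Fin m → Matrix (Fin d) (Fin d) ℝ} (hK : ∀ i, IsUnit (Ki i))
    {x : Stack d m} : preAct Ki x = 0 ↔ x = 0 := by
  refine ⟨fun h => ?_, fun h => by ext; simp [h, preAct]⟩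
  ext i k
  have hi : (Ki i).mulVec (x i) = 0 := congrArg (fun z : Stack d m => (z i).ofLp) h
  rw [(mulVec_injective_iff_isUnit.2 (hK i)).eq_iff' (mulVec_zero _)] at hi
  simp [hi]

theorem sum_lapAct_eq_zero {L : Matrix (Fin m) (Fin m) ℝ} (hL : ∀ j, ∑ i, L i j = 0)
    (x : Stack d m) : ∑ i, lapAct L x i = 0 := by
  simp only [lapAct, PiLp.toLp_apply]
  rw [Finset.sum_comm]
  exact Finset.sum_eq_zero fun j _ => by rw [← Finset.sum_smul, hL j, zero_smul]

end Stack

namespace SimpleGraph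

variable {m : ℕ} (G : SimpleGraph (Fin m)) [DecidableRel G.Adj]

theorem sum_lapMatrix_apply_left (j : Fin m) : ∑ i, G.lapMatrix ℝ i j = 0 := by
  have hrow := congrFun (G.lapMatrix_mulVec_const_eq_zero (R := ℝ)) j
  simp only [mulVec, dotProduct, mul_one, Pi.zero_apply] at hrow
  simpa only [(G.isSymm_lapMatrix (R := ℝ)).apply j] using hrow

theorem eq_of_lapAct_lapMatrix_eq_zero (hG : G.Connected) {d : ℕ} {x : Stack d m}
    (hx : lapAct (G.lapMatrix ℝ) x = 0) (i j : Fin m) : x i = x j := by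
  ext k
  have hker : G.lapMatrix ℝ *ᵥ (fun l => x l k) = 0 := funext fun l => by
    rw [← lapAct_apply_apply, hx]; rfl
  exact (G.lapMatrix_mulVec_eq_zero_iff_forall_reachable.1 hker) i j (hG.preconnected i j)

end SimpleGraph

theorem pi_consensus_equilibrium_is_stationary_consensus_general
    (d m : ℕ)
    (G : SimpleGraph (Fin m)) [DecidableRel G.Adj] (hG : G.Connected)
    (f : Fin m → EuclideanSpace ℝ (Fin d) → ℝ)
    (Ki : Fin m → Matrix (Fin d) (Fin d) ℝ)
    (hKi : ∀ i, (Ki i).PosDef)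
    (α β : ℝ) (hα : 0 < α) (hβ : 0 < β)
    (Xhat vhat : Stack d m)
    (heq₁ : preAct Ki (lapAct (G.lapMatrix ℝ) Xhat - β • lapAct (G.lapMatrix ℝ) vhat
      + α • gradCumulative f Xhat) = 0)
    (heq₂ : β • preAct Ki (lapAct (G.lapMatrix ℝ) Xhat) = 0) :
    ∃ xhat : EuclideanSpace ℝ (Fin d),
      (∀ i : Fin m, Xhat i = xhat) ∧ ∑ i, gradient (f i) xhat = 0 := by
  have hK : ∀ i, IsUnit (Ki i) := fun i => (hKi i).isUnit
  have hLX : lapAct (G.lapMatrix ℝ) Xhat = 0 :=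
    (preAct_eq_zero_iff hK).1 ((smul_eq_zero.1 heq₂).resolve_left hβ.ne')
  have hbalance : α • gradCumulative f Xhat = β • lapAct (G.lapMatrix ℝ) vhat := by
    have h := (preAct_eq_zero_iff hK).1 heq₁
    rw [hLX] at h
    linear_combination (norm := module) h
  obtain ⟨i₀⟩ := hG.nonempty
  have hcons := G.eq_of_lapAct_lapMatrix_eq_zero hG hLX
  refine ⟨Xhat i₀, fun i => hcons i i₀, ?_⟩
  have hsum : α • ∑ i, gradient (f i) (Xhat i₀) = 0 := calc
    α • ∑ i, gradient (f i) (Xhat i₀) = ∑ i, (α • gradCumulative f Xhat) i := by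
      simp [Finset.smul_sum, gradCumulative, hcons _ i₀]
    _ = β • ∑ i, lapAct (G.lapMatrix ℝ) vhat i := by simp [hbalance, Finset.smul_sum]
    _ = 0 := by rw [sum_lapAct_eq_zero G.sum_lapMatrix_apply_left, smul_zero]
  exact (smul_eq_zero.1 hsum).resolve_left hα.ne'

/-- Any equilibrium point `(X̂, v̂)` of the pre-conditioned PI consensus dynamics, i.e.
`K(L̃X̂ − βL̃v̂ + α∇F(X̂)) = 0` and `βKL̃X̂ = 0`, is a consensus point `X̂ = (x̂,…,x̂)`
with `x̂` a stationary point of the aggregate cost `f = ∑_i f_i`. -/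
theorem pi_consensus_equilibrium_is_stationary_consensus
    (d m : ℕ)
    (G : SimpleGraph (Fin m)) [DecidableRel G.Adj] (hG : G.Connected)
    (f : Fin m → EuclideanSpace ℝ (Fin d) → ℝ)
    (hf : ∀ i, ContDiff ℝ 1 (f i))
    (Ki : Fin m → Matrix (Fin d) (Fin d) ℝ)
    (hKi : ∀ i, (Ki i).PosDef)
    (α β : ℝ) (hα : 0 < α) (hβ : 0 < β)
    (Xhat vhat : Stack d m)
    (heq₁ : preAct Ki (lapAct (G.lapMatrix ℝ) Xhat - β • lapAct (G.lapMatrix ℝ) vhat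
      + α • gradCumulative f Xhat) = 0)
    (heq₂ : β • preAct Ki (lapAct (G.lapMatrix ℝ) Xhat) = 0) :
    ∃ xhat : EuclideanSpace ℝ (Fin d),
      (∀ i : Fin m, Xhat i = xhat) ∧ ∑ i, gradient (f i) xhat = 0 :=
  pi_consensus_equilibrium_is_stationary_consensus_general d m G hG f Ki hKi α β hα hβ Xhat vhat
    heq₁ heq₂
end

section
/- Let g : ℝ^N → ℝ be differentiable and satisfy the restricted secant inequality with respect to x* ∈ ℝ^N with constant μ > 0, and suppose ∇g(x*) = 0. Then (i) every y ∈ ℝ^N with ∇g(y) = 0 satisfies y = x*, and (ii) g(x) ≥ g(x*) + (μ/2)‖x − x*‖² for all x ∈ ℝ^N; in particular, x* is the unique global minimizer of g and every stationary point of g is the global minimizer. -/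
/-!
Along the segment `t ↦ x* + t • (x - x*)`, the restricted secant inequality says that the
derivative of `t ↦ g (x* + t • v) - t ⟪∇g x*, v⟫` is at least `μ t ‖v‖²` for `t > 0`;
integrating over `[0, 1]` gives the quadratic lower bound. At a second stationary point `y`
the inequality reads `μ ‖y - x*‖² ≤ 0`.
-/

open scoped RealInnerProductSpace
open Set

def RestrictedSecant {E : Type*} [NormedAddCommGroup E] [InnerProductSpace ℝ E]
    (G : E → E) (x₀ : E) (μ : ℝ) : Prop :=
  ∀ x, μ * ‖x - x₀‖ ^ 2 ≤ ⟪G x - G x₀, x - x₀⟫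

theorem add_half_le_of_hasDerivAt_of_mul_le {φ φ' : ℝ → ℝ} {c : ℝ}
    (hφ : ∀ t ∈ Icc (0 : ℝ) 1, HasDerivAt φ (φ' t) t) (hc : ∀ t ∈ Ioo (0 : ℝ) 1, c * t ≤ φ' t) :
    φ 0 + c / 2 ≤ φ 1 := by
  set ψ : ℝ → ℝ := fun t => φ t - c / 2 * t ^ 2
  have hψ : ∀ t ∈ Icc (0 : ℝ) 1, HasDerivAt ψ (φ' t - c * t) t := fun t ht =>
    ((hφ t ht).sub ((hasDerivAt_pow 2 t).const_mul (c / 2))).congr_deriv (by ring)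
  have hmono : MonotoneOn ψ (Icc 0 1) := by
    refine monotoneOn_of_deriv_nonneg (convex_Icc 0 1)
      (fun t ht => (hψ t ht).continuousAt.continuousWithinAt)
      (fun t ht => (hψ t (interior_subset ht)).differentiableAt.differentiableWithinAt)
      (fun t ht => ?_)
    rw [interior_Icc] at ht
    rw [(hψ t (Ioo_subset_Icc_self ht)).deriv, sub_nonneg]
    exact hc t ht
  have := hmono (left_mem_Icc.2 zero_le_one) (right_mem_Icc.2 zero_le_one) zero_le_one
  simp only [ψ] at this
  linarith

namespace RestrictedSecant

variable {E : Type*} [NormedAddCommGroup E] [InnerProductSpace ℝ E]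

theorem eq_of_apply_eq {G : E → E} {x₀ y : E} {μ : ℝ} (h : RestrictedSecant G x₀ μ)
    (hμ : 0 < μ) (hy : G y = G x₀) : y = x₀ := by
  have hle : μ * ‖y - x₀‖ ^ 2 ≤ 0 := by simpa [hy] using h y
  have : ‖y - x₀‖ ^ 2 = 0 :=
    le_antisymm (nonpos_of_mul_nonpos_right hle hμ) (sq_nonneg _)
  simpa [sub_eq_zero] using this

theorem quadratic_lower_bound [CompleteSpace E] {f : E → ℝ} {x₀ : E} {μ : ℝ}
    (hf : Differentiable ℝ f) (h : RestrictedSecant (gradient f) x₀ μ) (x : E) :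
    f x₀ + ⟪gradient f x₀, x - x₀⟫ + μ / 2 * ‖x - x₀‖ ^ 2 ≤ f x := by
  set v := x - x₀
  have hline : ∀ t : ℝ, HasDerivAt (fun t : ℝ => f (x₀ + t • v))
      ⟪gradient f (x₀ + t • v), v⟫ t := fun t => by
    have hpath : HasDerivAt (fun t : ℝ => x₀ + t • v) v t := by
      simpa using ((hasDerivAt_id t).smul_const v).const_add x₀
    exact ((hf _).hasGradientAt.hasFDerivAt.comp_hasDerivAt t hpath).congr_deriv (by simp)
  have hφ : ∀ t ∈ Icc (0 : ℝ) 1, HasDerivAt (fun t : ℝ => f (x₀ + t • v) - t * ⟪gradient f x₀, v⟫)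
      ⟪gradient f (x₀ + t • v) - gradient f x₀, v⟫ t := fun t _ =>
    ((hline t).sub ((hasDerivAt_id t).mul_const _)).congr_deriv (by rw [inner_sub_left, one_mul])
  -- The secant inequality at `x₀ + t • v`, divided by `t > 0`.
  have hc : ∀ t ∈ Ioo (0 : ℝ) 1, μ * ‖v‖ ^ 2 * t ≤ ⟪gradient f (x₀ + t • v) - gradient f x₀, v⟫ :=
    fun t ht => by
    have hsec := h (x₀ + t • v)
    rw [add_sub_cancel_left, norm_smul, real_inner_smul_right, Real.norm_of_nonneg ht.1.le] at hsec
    nlinarith [ht.1]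
  have := add_half_le_of_hasDerivAt_of_mul_le hφ hc
  simp only [zero_smul, add_zero, one_smul, zero_mul, sub_zero, one_mul, v,
    add_sub_cancel] at this
  linarith

end RestrictedSecant

/-- If a differentiable `g : ℝ^N → ℝ` satisfies the restricted secant inequality with
respect to `x*` with constant `μ > 0` and `∇g(x*) = 0`, then (i) `x*` is the unique
stationary point of `g`, and (ii) `g(x) ≥ g(x*) + (μ/2)‖x − x*‖²` for all `x`; in
particular `x*` is the unique global minimizer of `g`. -/
theorem rsi_unique_stationary_point_and_quadratic_growth
    (N : ℕ) (g : EuclideanSpace ℝ (Fin N) → ℝ) (hg : Differentiable ℝ g)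
    (xstar : EuclideanSpace ℝ (Fin N)) (μ : ℝ) (hμ : 0 < μ)
    (hRSI : ∀ x : EuclideanSpace ℝ (Fin N),
      μ * ‖x - xstar‖ ^ 2 ≤ ⟪gradient g x - gradient g xstar, x - xstar⟫)
    (hstar : gradient g xstar = 0) :
    (∀ y : EuclideanSpace ℝ (Fin N), gradient g y = 0 → y = xstar) ∧
    (∀ x : EuclideanSpace ℝ (Fin N), g xstar + (μ / 2) * ‖x - xstar‖ ^ 2 ≤ g x) := by
  have hRS : RestrictedSecant (gradient g) xstar μ := hRSI
  refine ⟨fun y hy => hRS.eq_of_apply_eq hμ (hy.trans hstar.symm), fun x => ?_⟩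
  simpa [hstar] using hRS.quadratic_lower_bound hg x
end

section
/- Let V : ℝ^N → ℝ be differentiable with η-Lipschitz gradient (η > 0), let Z ∈ ℝ^N with V(Z) ≥ 0, let G ∈ ℝ^N, and let ε₁, ε₃, h > 0. Suppose ⟨G, ∇V(Z)⟩ ≥ ε₁ V(Z) and ‖G‖² ≤ ε₃ V(Z). Then V(Z − h G) ≤ (1 − h (2ε₁ − h η ε₃)/2) V(Z). In particular, if h < 2ε₁/(η ε₃), then V(Z − hG) ≤ ρ V(Z) with ρ = 1 − h(2ε₁ − hηε₃)/2 < 1. -/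
open scoped RealInnerProductSpace

section Descent

variable {F : Type*} [NormedAddCommGroup F] [InnerProductSpace ℝ F] [CompleteSpace F]
  {f : F → ℝ}

theorem DifferentiableAt.hasDerivAt_comp_add_smul {x d : F} {t : ℝ}
    (hf : DifferentiableAt ℝ f (x + t • d)) :
    HasDerivAt (fun s : ℝ => f (x + s • d)) ⟪gradient f (x + t • d), d⟫ t := by
  have hline : HasDerivAt (fun s : ℝ => x + s • d) d t := by
    simpa using ((hasDerivAt_id t).smul_const d).const_add x
  rw [inner_gradient_left]
  exact hf.hasFDerivAt.comp_hasDerivAt t hline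

/-- The descent lemma. The function `t ↦ f (x + t • d) - t ⟪∇f x, d⟫ - K t² ‖d‖² / 2` has
derivative `⟪∇f (x + t • d) - ∇f x, d⟫ - K t ‖d‖² ≤ 0` for `t ≥ 0`, so it is antitone there. -/
theorem image_add_le_of_lipschitzWith_gradient {K : NNReal} (hf : Differentiable ℝ f)
    (hK : LipschitzWith K (gradient f)) (x d : F) :
    f (x + d) ≤ f x + ⟪gradient f x, d⟫ + K / 2 * ‖d‖ ^ 2 := by
  set g : ℝ → ℝ := fun t => f (x + t • d) - t * ⟪gradient f x, d⟫ - K / 2 * t ^ 2 * ‖d‖ ^ 2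
  have hg : ∀ t, HasDerivAt g
      (⟪gradient f (x + t • d), d⟫ - ⟪gradient f x, d⟫ - K * t * ‖d‖ ^ 2) t := by
    intro t
    have := (((hf (x + t • d)).hasDerivAt_comp_add_smul).sub
      ((hasDerivAt_id t).mul_const ⟪gradient f x, d⟫)).sub
      (((hasDerivAt_pow 2 t).const_mul ((K : ℝ) / 2)).mul_const (‖d‖ ^ 2))
    exact this.congr_deriv (by simp only [Nat.cast_ofNat]; ring)
  have hg' : ∀ t ∈ interior (Set.Ici (0 : ℝ)),
      ⟪gradient f (x + t • d), d⟫ - ⟪gradient f x, d⟫ - K * t * ‖d‖ ^ 2 ≤ 0 := by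
    intro t ht
    rw [interior_Ici, Set.mem_Ioi] at ht
    have hlip : ‖gradient f (x + t • d) - gradient f x‖ ≤ K * (t * ‖d‖) := by
      simpa [norm_smul, abs_of_pos ht] using hK.norm_sub_le (x + t • d) x
    rw [sub_nonpos]
    calc ⟪gradient f (x + t • d), d⟫ - ⟪gradient f x, d⟫
        = ⟪gradient f (x + t • d) - gradient f x, d⟫ := (inner_sub_left ..).symm
      _ ≤ ‖gradient f (x + t • d) - gradient f x‖ * ‖d‖ := real_inner_le_norm _ _
      _ ≤ K * (t * ‖d‖) * ‖d‖ := by gcongr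
      _ = K * t * ‖d‖ ^ 2 := by ring
  have hanti : AntitoneOn g (Set.Ici 0) :=
    antitoneOn_of_hasDerivWithinAt_nonpos (convex_Ici 0)
      (fun t _ => (hg t).continuousAt.continuousWithinAt)
      (fun t _ => (hg t).hasDerivWithinAt) hg'
  have hend : g 1 ≤ g 0 := hanti Set.self_mem_Ici (Set.mem_Ici.2 zero_le_one) zero_le_one
  simp only [g, one_smul, zero_smul, add_zero] at hend
  linarith

theorem image_sub_smul_le_of_lipschitzWith_gradient {K : NNReal} (hf : Differentiable ℝ f)
    (hK : LipschitzWith K (gradient f)) (x g : F) (h : ℝ) :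
    f (x - h • g) ≤ f x - h * ⟪g, gradient f x⟫ + K / 2 * h ^ 2 * ‖g‖ ^ 2 := by
  have := image_add_le_of_lipschitzWith_gradient hf hK x (-(h • g))
  rwa [← sub_eq_add_neg, inner_neg_right, real_inner_smul_right, real_inner_comm, norm_neg,
    norm_smul, mul_pow, Real.norm_eq_abs, sq_abs, ← sub_eq_add_neg, ← mul_assoc] at this

end Descent

theorem lyapunov_one_step_decrease_general
    (N : ℕ) (V : EuclideanSpace ℝ (Fin N) → ℝ) (hV : Differentiable ℝ V)
    (η : ℝ) (hη : 0 < η)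
    (hgradLip : ∀ x y : EuclideanSpace ℝ (Fin N),
      ‖gradient V x - gradient V y‖ ≤ η * ‖x - y‖)
    (Z G : EuclideanSpace ℝ (Fin N))
    (ε₁ ε₃ h : ℝ) (hε₃ : 0 < ε₃) (hh : 0 < h)
    (hdesc : ε₁ * V Z ≤ ⟪G, gradient V Z⟫)
    (hGbd : ‖G‖ ^ 2 ≤ ε₃ * V Z) :
    V (Z - h • G) ≤ (1 - h * (2 * ε₁ - h * η * ε₃) / 2) * V Z ∧
    (h < 2 * ε₁ / (η * ε₃) → 1 - h * (2 * ε₁ - h * η * ε₃) / 2 < 1) := by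
  have hLip : LipschitzWith η.toNNReal (gradient V) :=
    LipschitzWith.of_dist_le' fun x y => by simpa only [dist_eq_norm] using hgradLip x y
  refine ⟨?_, fun hsmall => ?_⟩
  · calc V (Z - h • G)
        ≤ V Z - h * ⟪G, gradient V Z⟫ + η / 2 * h ^ 2 * ‖G‖ ^ 2 := by
          simpa only [Real.coe_toNNReal η hη.le]
            using image_sub_smul_le_of_lipschitzWith_gradient hV hLip Z G h
      _ ≤ V Z - h * (ε₁ * V Z) + η / 2 * h ^ 2 * (ε₃ * V Z) := by gcongr
      _ = (1 - h * (2 * ε₁ - h * η * ε₃) / 2) * V Z := by ring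
  · have hgap : 0 < 2 * ε₁ - h * η * ε₃ := by
      rw [lt_div_iff₀ (by positivity)] at hsmall
      linarith
    have := mul_pos hh hgap
    linarith

/-- One-step decrease of a Lyapunov function with `η`-Lipschitz gradient along the
step `Z ↦ Z − hG`: if `⟪G, ∇V(Z)⟫ ≥ ε₁V(Z)`, `‖G‖² ≤ ε₃V(Z)` and `V(Z) ≥ 0`, then
`V(Z − hG) ≤ (1 − h(2ε₁ − hηε₃)/2)V(Z)`; in particular the factor is `< 1` when
`h < 2ε₁/(ηε₃)`. -/
theorem lyapunov_one_step_decrease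
    (N : ℕ) (V : EuclideanSpace ℝ (Fin N) → ℝ) (hV : Differentiable ℝ V)
    (η : ℝ) (hη : 0 < η)
    (hgradLip : ∀ x y : EuclideanSpace ℝ (Fin N),
      ‖gradient V x - gradient V y‖ ≤ η * ‖x - y‖)
    (Z G : EuclideanSpace ℝ (Fin N)) (hVZ : 0 ≤ V Z)
    (ε₁ ε₃ h : ℝ) (hε₁ : 0 < ε₁) (hε₃ : 0 < ε₃) (hh : 0 < h)
    (hdesc : ε₁ * V Z ≤ ⟪G, gradient V Z⟫)
    (hGbd : ‖G‖ ^ 2 ≤ ε₃ * V Z) :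
    V (Z - h • G) ≤ (1 - h * (2 * ε₁ - h * η * ε₃) / 2) * V Z ∧
    (h < 2 * ε₁ / (η * ε₃) → 1 - h * (2 * ε₁ - h * η * ε₃) / 2 < 1) :=
  lyapunov_one_step_decrease_general N V hV η hη hgradLip Z G ε₁ ε₃ h hε₃ hh hdesc hGbd
end
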